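/- For every complex number z, the 2x2 matrix product exp(z J_-) * exp(alpha J_+) * exp(beta J_3), with alpha = -conj(z)/(1+|z|^2) and beta = -log(1+|z|^2), is a special unitary matrix (i.e., lies in SU(2)), where J_3 = (1/2) diag(1,-1), J_+ = [[0,1],[0,0]], J_- = [[0,0],[1,0]] in the fundamental representation. -/

import Mathlib

/-!
The factors `exp (z J₋)` and `exp (α J₊)` are unipotent, equal to `1 + z J₋` and `1 + α J₊`, and
`exp (β J₃) = diag (r^{-1/2}, r^{1/2})` with `r = 1 + |z|²`. Multiplying out, the choice
`α = -z̄ / r` makes the product equal to `r^{-1/2} [[1, -z̄], [z, 1]]`, which has the Cayley–Klein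
form `[[a, -b̄], [b, ā]]` with `|a|² + |b|² = 1`, and every such matrix lies in `SU(2)`.
-/

open Complex Matrix

/-- `J₃` in the fundamental representation of `su(2)`. -/
noncomputable def fJ3 : Matrix (Fin 2) (Fin 2) ℂ := !![1/2, 0; 0, -1/2]

/-- `J₊`. -/
def fJplus : Matrix (Fin 2) (Fin 2) ℂ := !![0, 1; 0, 0]

/-- `J₋`. -/
def fJminus : Matrix (Fin 2) (Fin 2) ℂ := !![0, 0; 1, 0]

theorem NormedSpace.exp_eq_one_add_of_sq_eq_zero {𝔸 : Type*} [Ring 𝔸] [Algebra ℚ 𝔸]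
    [TopologicalSpace 𝔸] [IsTopologicalRing 𝔸] {x : 𝔸} (hx : x ^ 2 = 0) :
    exp x = 1 + x := by
  have hvanish : ∀ n ∉ Finset.range 2, (n.factorial⁻¹ : ℚ) • x ^ n = 0 := fun n hn => by
    rw [Finset.mem_range, not_lt] at hn
    rw [← Nat.add_sub_cancel' hn, pow_add, hx, zero_mul, smul_zero]
  rw [exp_eq_tsum_rat]
  dsimp only
  rw [tsum_eq_sum hvanish]
  simp [Finset.sum_range_succ]

theorem Real.exp_log_div_two {r : ℝ} (hr : 0 < r) : exp (log r / 2) = √r := by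
  rw [sqrt_eq_rpow, rpow_def_of_pos hr]
  ring_nf

theorem Matrix.cayleyKlein_mem_specialUnitaryGroup {R : Type*} [CommRing R] [StarRing R]
    {a b : R} (h : a * star a + b * star b = 1) :
    !![a, -star b; b, star a] ∈ specialUnitaryGroup (Fin 2) R := by
  have hstar : star !![a, -star b; b, star a] = !![star a, star b; -b, a] := by
    ext i j; fin_cases i <;> fin_cases j <;> simp
  refine mem_specialUnitaryGroup_iff.2 ⟨mem_unitaryGroup_iff.2 ?_, ?_⟩
  · rw [hstar, mul_fin_two, one_fin_two]
    congrm !![?_, ?_; ?_, ?_]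
    · linear_combination h
    · ring
    · ring
    · linear_combination h
  · rw [det_fin_two_of]
    linear_combination h

theorem exp_smul_fJminus (z : ℂ) : NormedSpace.exp (z • fJminus) = !![1, 0; z, 1] := by
  rw [NormedSpace.exp_eq_one_add_of_sq_eq_zero] <;>
    ext i j <;> fin_cases i <;> fin_cases j <;> simp [fJminus, sq]

theorem exp_smul_fJplus (w : ℂ) : NormedSpace.exp (w • fJplus) = !![1, w; 0, 1] := by
  rw [NormedSpace.exp_eq_one_add_of_sq_eq_zero] <;>
    ext i j <;> fin_cases i <;> fin_cases j <;> simp [fJplus, sq]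

theorem exp_smul_fJ3 (c : ℂ) :
    NormedSpace.exp (c • fJ3) = !![Complex.exp (c / 2), 0; 0, Complex.exp (-c / 2)] := by
  have hdiag : c • fJ3 = diagonal ![c / 2, -c / 2] := by
    ext i j; fin_cases i <;> fin_cases j <;> simp [fJ3, div_eq_mul_inv]
  rw [hdiag, exp_diagonal, Complex.exp_eq_exp_ℂ]
  ext i j; fin_cases i <;> fin_cases j <;> simp

theorem exp_neg_log_smul_fJ3 {r : ℝ} (hr : 0 < r) :
    NormedSpace.exp (((-Real.log r : ℝ) : ℂ) • fJ3) =
      !![((√r : ℝ) : ℂ)⁻¹, 0; 0, ((√r : ℝ) : ℂ)] := by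
  have hsqrt : Complex.exp (Real.log r / 2) = √r := by
    exact_mod_cast congrArg ofReal (Real.exp_log_div_two hr)
  rw [exp_smul_fJ3]
  push_cast
  rw [neg_neg, neg_div, Complex.exp_neg, hsqrt]

theorem gauge_decomposition_in_SU2 (z : ℂ) :
    letI M := NormedSpace.exp (z • fJminus) *
      NormedSpace.exp ((-(starRingEnd ℂ z) / (1 + ‖z‖ ^ 2)) • fJplus) *
      NormedSpace.exp (((-Real.log (1 + ‖z‖ ^ 2) : ℝ) : ℂ) • fJ3)
    M * Mᴴ = 1 ∧ M.det = 1 := by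
  have hr : 0 < 1 + ‖z‖ ^ 2 := by positivity
  set s : ℂ := ((√(1 + ‖z‖ ^ 2) : ℝ) : ℂ)
  have hs : s ≠ 0 := ofReal_ne_zero.2 (Real.sqrt_pos.2 hr).ne'
  have hs_star : star s = s := conj_ofReal _
  have hs_sq : s ^ 2 = 1 + ‖z‖ ^ 2 := by
    rw [← ofReal_pow, Real.sq_sqrt hr.le, ofReal_add, ofReal_one, ofReal_pow]
  have hs_sq_conj : s ^ 2 = 1 + z * starRingEnd ℂ z := by rw [hs_sq, mul_conj']
  have hM : !![1, 0; z, 1] * !![1, -(starRingEnd ℂ z) / s ^ 2; 0, 1] * !![s⁻¹, 0; 0, s] =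
      !![s⁻¹, -star (z * s⁻¹); z * s⁻¹, star s⁻¹] := by
    rw [mul_fin_two, mul_fin_two, star_mul', star_inv₀, hs_star, RCLike.star_def]
    congrm !![?_, ?_; ?_, ?_]
    · ring
    · field_simp
      ring
    · ring
    · field_simp
      linear_combination hs_sq_conj
  obtain ⟨hU, hdet⟩ := cayleyKlein_mem_specialUnitaryGroup (a := s⁻¹) (b := z * s⁻¹) (by
    rw [star_mul', star_inv₀, hs_star, RCLike.star_def]
    field_simp
    linear_combination -hs_sq_conj)
  rw [exp_smul_fJminus, exp_smul_fJplus, exp_neg_log_smul_fJ3 hr, ← hs_sq, hM]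
  exact ⟨mem_unitaryGroup_iff.1 hU, hdet⟩
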